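/- Lemma 3.9: a divisor D : V → ℤ is a sum of tails if and only if every pair (i, j) with m i j > 0 and D i ≠ D j is separating (i.e. the set S(D) of nodes joining components with different coefficients of D consists of separating nodes of X). Equivalently, for t ∈ Λ_X: t ∈ Λ_X^0 iff S(t) consists of separating nodes. -/

import Mathlib

open Finset

variable {V : Type*}

/-- The multidegree of a divisor `D` on the nodal curve with dual multigraph `m`:
`(deg D) j = ∑ i, (D i - D j) * m i j`. -/
def mdeg [Fintype V] (m : V → V → ℕ) (D : V → ℤ) : V → ℤ :=
  fun j => ∑ i, (D i - D j) * (m i j : ℤ)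

/-- `k_Z`: the number of nodes where the subcurve `Z` meets its complementary curve. -/
def kdeg [Fintype V] [DecidableEq V] (m : V → V → ℕ) (Z : Finset V) : ℕ :=
  ∑ i ∈ Z, ∑ j ∈ Zᶜ, m i j

/-- The pair `(i, j)` (with `m i j > 0`) corresponds to a separating node:
`m i j = 1` and the edge `{i, j}` is a bridge of `G`. -/
def Separating (m : V → V → ℕ) (G : SimpleGraph V) (i j : V) : Prop :=
  m i j = 1 ∧ G.IsBridge s(i, j)

/-- A tail: a nonempty proper subcurve meeting its complement in a single node. -/
def IsTail [Fintype V] [DecidableEq V] (m : V → V → ℕ) (Q : Finset V) : Prop :=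
  Q.Nonempty ∧ Q ≠ Finset.univ ∧ kdeg m Q = 1

/-- A divisor is a sum of tails if `D = c·1_V + ∑ h a_h · 1_{Q_h}` with the `Q_h` tails. -/
def SumOfTails [Fintype V] [DecidableEq V] (m : V → V → ℕ) (D : V → ℤ) : Prop :=
  ∃ (c : ℤ) (k : ℕ) (a : Fin k → ℤ) (Q : Fin k → Finset V),
    (∀ h, IsTail m (Q h)) ∧
    ∀ i, D i = c + ∑ h, a h * (if i ∈ Q h then 1 else 0)

/-- `Λ_X`: the group of multidegrees of twisters, i.e. the image of `mdeg`. -/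
def Lambda [Fintype V] (m : V → V → ℕ) : Set (V → ℤ) := Set.range (mdeg m)

/-- `Λ_X^0`: multidegrees of sums of tails. -/
def Lambda0 [Fintype V] [DecidableEq V] (m : V → V → ℕ) : Set (V → ℤ) :=
  {t | ∃ D, SumOfTails m D ∧ mdeg m D = t}

/-- The essential connectivity `ε(X)`: the infimum of `k_Z` over nonempty proper `Z ⊆ V`
such that some pair `(i,j)` with `i ∈ Z`, `j ∉ Z`, `m i j > 0` is not separating. -/
noncomputable def eps [Fintype V] [DecidableEq V] (m : V → V → ℕ) (G : SimpleGraph V) : ℕ∞ :=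
  sInf ((fun Z : Finset V => (kdeg m Z : ℕ∞)) ''
    {Z | Z.Nonempty ∧ Z ≠ Finset.univ ∧
      ∃ i ∈ Z, ∃ j, j ∉ Z ∧ 0 < m i j ∧ ¬ Separating m G i j})


/-!
A tail `Q` meets its complement in a single node of multiplicity one, and every path from `Q`
to its complement must use that node, so it is separating; since the coefficients of `1_Q`
differ only across that node, the nodes where a sum of tails jumps are all separating.
Conversely, for a separating node `(i, j)` the component of `i` in `G` minus the edge `ij` is
a tail, and subtracting the jump `D i - D j` times its indicator removes the node `(i, j)`
from the jump set of `D` without creating new jumps. Induction on the number of jumps leaves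
a divisor that is constant along every edge, hence constant since `G` is connected.
-/

section Tails

variable [Fintype V] {m : V → V → ℕ} {G : SimpleGraph V} {Q : Finset V} {i j a b : V}

/-- The paper's `S(D)`, recorded as ordered pairs of components. -/
def jumpPairs (m : V → V → ℕ) (D : V → ℤ) : Finset (V × V) :=
  univ.filter fun p => 0 < m p.1 p.2 ∧ D p.1 ≠ D p.2

@[simp]
lemma mem_jumpPairs {D : V → ℤ} : (a, b) ∈ jumpPairs m D ↔ 0 < m a b ∧ D a ≠ D b := by
  simp [jumpPairs]

variable [DecidableEq V]

lemma kdeg_eq_sum_product (m : V → V → ℕ) (Q : Finset V) :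
    kdeg m Q = ∑ p ∈ Q ×ˢ Qᶜ, m p.1 p.2 := by
  rw [kdeg, sum_product]

lemma kdeg_compl (hsym : ∀ i j, m i j = m j i) (Q : Finset V) : kdeg m Qᶜ = kdeg m Q := by
  rw [kdeg, kdeg, compl_compl, sum_comm]
  simp only [hsym]

lemma IsTail.compl (hsym : ∀ i j, m i j = m j i) (hQ : IsTail m Q) : IsTail m Qᶜ :=
  ⟨(compl_ne_univ_iff_nonempty Qᶜ).1 (by rw [compl_compl]; exact hQ.2.1),
    (compl_ne_univ_iff_nonempty Q).2 hQ.1, (kdeg_compl hsym Q).trans hQ.2.2⟩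

lemma IsTail.crossing_le_one (hQ : IsTail m Q) (hi : i ∈ Q) (hj : j ∉ Q) : m i j ≤ 1 := by
  have := single_le_sum (f := fun p : V × V => m p.1 p.2) (s := Q ×ˢ Qᶜ) (a := (i, j))
    (fun _ _ => Nat.zero_le _) (mem_product.2 ⟨hi, mem_compl.2 hj⟩)
  rwa [← kdeg_eq_sum_product, hQ.2.2] at this

lemma IsTail.eq_of_crossing (hQ : IsTail m Q) (hi : i ∈ Q) (hj : j ∉ Q) (hm : 0 < m i j)
    (ha : a ∈ Q) (hb : b ∉ Q) (hab : 0 < m a b) : (a, b) = (i, j) := by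
  by_contra hne
  have := add_le_sum (f := fun p : V × V => m p.1 p.2) (fun _ _ => Nat.zero_le _)
    (mem_product.2 ⟨ha, mem_compl.2 hb⟩) (mem_product.2 ⟨hi, mem_compl.2 hj⟩) hne
  rw [← kdeg_eq_sum_product, hQ.2.2] at this
  simp only at this
  omega

lemma IsTail.separating (hG : ∀ i j, G.Adj i j ↔ i ≠ j ∧ 0 < m i j)
    (hQ : IsTail m Q) (hi : i ∈ Q) (hj : j ∉ Q) (hm : 0 < m i j) : Separating m G i j := by
  refine ⟨le_antisymm (hQ.crossing_le_one hi hj) hm,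
    SimpleGraph.isBridge_iff.2 fun ⟨w⟩ => ?_⟩
  obtain ⟨d, -, hd₁, hd₂⟩ := w.exists_boundary_dart (Q : Set V) hi hj
  obtain ⟨hadj, hne⟩ := SimpleGraph.deleteEdges_adj.1 d.adj
  obtain ⟨h₁, h₂⟩ :=
    Prod.ext_iff.1 (hQ.eq_of_crossing hi hj hm hd₁ hd₂ ((hG _ _).1 hadj).2)
  exact hne (by rw [h₁, h₂]; rfl)

lemma IsTail.mem_iff_mem_or_eq (hsym : ∀ i j, m i j = m j i) (hQ : IsTail m Q) (hi : i ∈ Q)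
    (hj : j ∉ Q) (hm : 0 < m i j) (hab : 0 < m a b) :
    (a ∈ Q ↔ b ∈ Q) ∨ s(a, b) = s(i, j) := by
  by_cases ha : a ∈ Q <;> by_cases hb : b ∈ Q
  · exact .inl (iff_of_true ha hb)
  · obtain ⟨rfl, rfl⟩ := Prod.ext_iff.1 (hQ.eq_of_crossing hi hj hm ha hb hab)
    exact .inr rfl
  · obtain ⟨rfl, rfl⟩ := Prod.ext_iff.1 <| (hQ.compl hsym).eq_of_crossing (mem_compl.2 hj)
      (notMem_compl.2 hi) (hsym i j ▸ hm) (mem_compl.2 ha) (notMem_compl.2 hb) hab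
    exact .inr Sym2.eq_swap
  · exact .inl (iff_of_false ha hb)

lemma SumOfTails.separating (hsym : ∀ i j, m i j = m j i)
    (hG : ∀ i j, G.Adj i j ↔ i ≠ j ∧ 0 < m i j) {D : V → ℤ} (hD : SumOfTails m D)
    (hm : 0 < m i j) (hne : D i ≠ D j) : Separating m G i j := by
  obtain ⟨c, k, a, Q, hQ, hrep⟩ := hD
  obtain ⟨h, hh⟩ : ∃ h, ¬(i ∈ Q h ↔ j ∈ Q h) := by
    by_contra! hall
    exact hne (by simp only [hrep, hall])
  by_cases hi : i ∈ Q h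
  · exact (hQ h).separating hG hi (fun hj => hh (iff_of_true hi hj)) hm
  · exact ((hQ h).compl hsym).separating hG (mem_compl.2 hi)
      (notMem_compl.2 (by_contra fun hj => hh (iff_of_false hi hj))) hm

lemma SumOfTails.add_tail {D : V → ℤ} (hD : SumOfTails m D) (hQ : IsTail m Q) (a : ℤ) :
    SumOfTails m (fun v => D v + a * if v ∈ Q then 1 else 0) := by
  obtain ⟨c, k, as, Qs, hQs, hrep⟩ := hD
  refine ⟨c, k + 1, Fin.cons a as, Fin.cons Q Qs, Fin.cons hQ hQs, fun v => ?_⟩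
  rw [Fin.sum_univ_succ]
  simp only [hrep v, Fin.cons_zero, Fin.cons_succ]
  ring

lemma sumOfTails_of_forall_eq (hG : ∀ i j, G.Adj i j ↔ i ≠ j ∧ 0 < m i j)
    (hconn : G.Connected) {D : V → ℤ} (hD : ∀ i j, 0 < m i j → D i = D j) :
    SumOfTails m D := by
  obtain ⟨v₀⟩ := hconn.nonempty
  have hconst : ∀ v, D v = D v₀ := by
    intro v
    by_contra hne
    obtain ⟨w⟩ := hconn.preconnected v v₀
    obtain ⟨d, -, hd₁, hd₂⟩ := w.exists_boundary_dart {u | D u = D v} rfl (Ne.symm hne)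
    exact hd₂ ((hD _ _ ((hG _ _).1 d.adj).2).symm.trans hd₁)
  exact ⟨D v₀, 0, Fin.elim0, Fin.elim0, fun h => h.elim0, fun v => by simp [hconst v]⟩

lemma Separating.exists_isTail (hG : ∀ i j, G.Adj i j ↔ i ≠ j ∧ 0 < m i j)
    (h : Separating m G i j) : ∃ Q, IsTail m Q ∧ i ∈ Q ∧ j ∉ Q := by
  classical
  set G' := G.deleteEdges {s(i, j)}
  set Q := univ.filter (G'.Reachable i)
  have hiQ : i ∈ Q := mem_filter.2 ⟨mem_univ _, SimpleGraph.Reachable.refl i⟩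
  have hjQ : j ∉ Q := fun hj => SimpleGraph.isBridge_iff.1 h.2 (mem_filter.1 hj).2
  have hcross : ∀ p ∈ Q ×ˢ Qᶜ, p ≠ (i, j) → m p.1 p.2 = 0 := by
    rintro ⟨a, b⟩ hp hne
    obtain ⟨ha, hb⟩ := mem_product.1 hp
    by_contra hab
    have hadj : G.Adj a b :=
      (hG a b).2 ⟨by rintro rfl; exact mem_compl.1 hb ha, Nat.pos_of_ne_zero hab⟩
    have hadj' : G'.Adj a b := by
      refine SimpleGraph.deleteEdges_adj.2 ⟨hadj, fun he => ?_⟩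
      rcases Sym2.eq_iff.1 (Set.mem_singleton_iff.1 he) with ⟨rfl, rfl⟩ | ⟨rfl, rfl⟩
      · exact hne rfl
      · exact hjQ ha
    exact mem_compl.1 hb
      (mem_filter.2 ⟨mem_univ _, (mem_filter.1 ha).2.trans hadj'.reachable⟩)
  refine ⟨Q, ⟨⟨i, hiQ⟩, fun hQ => hjQ (hQ ▸ mem_univ j), ?_⟩, hiQ, hjQ⟩
  rw [kdeg_eq_sum_product, sum_eq_single_of_mem (i, j) (mem_product.2 ⟨hiQ, mem_compl.2 hjQ⟩)
    hcross]
  exact h.1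

lemma IsTail.jumpPairs_ssubset (hsym : ∀ i j, m i j = m j i) (hQ : IsTail m Q) (hi : i ∈ Q)
    (hj : j ∉ Q) (hm : 0 < m i j) {D : V → ℤ} (hne : D i ≠ D j) :
    jumpPairs m (fun v => D v + (D j - D i) * if v ∈ Q then 1 else 0) ⊂ jumpPairs m D := by
  refine ssubset_iff_of_subset (fun ⟨a, b⟩ hab => ?_) |>.2
    ⟨(i, j), mem_jumpPairs.2 ⟨hm, hne⟩, by simp [hi, hj]⟩
  obtain ⟨hmab, hD'⟩ := mem_jumpPairs.1 hab
  refine mem_jumpPairs.2 ⟨hmab, ?_⟩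
  rcases hQ.mem_iff_mem_or_eq hsym hi hj hm hmab with hQab | he
  · intro hDab
    exact hD' (by simp only [hQab, hDab])
  · rcases Sym2.eq_iff.1 he with ⟨rfl, rfl⟩ | ⟨rfl, rfl⟩
    exacts [hne, hne.symm]

theorem sumOfTails_of_forall_separating (hsym : ∀ i j, m i j = m j i)
    (hG : ∀ i j, G.Adj i j ↔ i ≠ j ∧ 0 < m i j) (hconn : G.Connected) (D : V → ℤ)
    (hsep : ∀ i j, 0 < m i j → D i ≠ D j → Separating m G i j) : SumOfTails m D := by
  by_cases hjump : ∃ i j, 0 < m i j ∧ D i ≠ D j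
  · obtain ⟨i, j, hm, hne⟩ := hjump
    obtain ⟨Q, hQ, hi, hj⟩ := (hsep i j hm hne).exists_isTail hG
    have hlt := hQ.jumpPairs_ssubset hsym hi hj hm hne
    have hD' := sumOfTails_of_forall_separating hsym hG hconn _ fun a b hab hne' =>
      hsep a b hab (mem_jumpPairs.1 (hlt.subset (mem_jumpPairs.2 ⟨hab, hne'⟩))).2
    convert hD'.add_tail hQ (D i - D j) using 1
    funext v
    ring
  · push Not at hjump
    exact sumOfTails_of_forall_eq hG hconn hjump
termination_by (jumpPairs m D).card
decreasing_by exact card_lt_card hlt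

end Tails

theorem sum_of_tails_iff_separating_general [Fintype V] [DecidableEq V]
    (m : V → V → ℕ) (hsym : ∀ i j, m i j = m j i)
    (G : SimpleGraph V) (hG : ∀ i j, G.Adj i j ↔ i ≠ j ∧ 0 < m i j)
    (hconn : G.Connected) (D : V → ℤ) :
    SumOfTails m D ↔ ∀ i j, 0 < m i j → D i ≠ D j → Separating m G i j :=
  ⟨fun hD _ _ hm hne => hD.separating hsym hG hm hne,
    sumOfTails_of_forall_separating hsym hG hconn D⟩

/-- Lemma 3.9: a divisor `D` is a sum of tails iff every node joining components with
different coefficients of `D` is a separating node. -/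
theorem sum_of_tails_iff_separating [Fintype V] [DecidableEq V] [Nonempty V]
    (m : V → V → ℕ) (hsym : ∀ i j, m i j = m j i) (hdiag : ∀ i, m i i = 0)
    (G : SimpleGraph V) (hG : ∀ i j, G.Adj i j ↔ i ≠ j ∧ 0 < m i j)
    (hconn : G.Connected) (D : V → ℤ) :
    SumOfTails m D ↔ ∀ i j, 0 < m i j → D i ≠ D j → Separating m G i j :=
  sum_of_tails_iff_separating_general m hsym G hG hconn D
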